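/- (GT-symmetry–protected quantized Berry phase.) Let n ≥ 1, and let ψ : ℝ → ℂⁿ be continuously differentiable and 2π-periodic with ⟪ψ(φ), ψ(φ)⟫ = 1 for all φ. Let τ be an n×n complex matrix with τ†·τ = 1 and τ·conj(τ) = 1 (a symmetric unitary, so the antiunitary operation squares to the identity), and suppose there is a differentiable function ρ : ℝ → ℂ such that for all φ, τ·conj(ψ(φ)) = ρ(φ)·ψ(φ) (the state in the GT-invariant subspace is mapped to itself). Then exp( 2 ∫_{−π}^{π} ⟪ψ(φ), ψ′(φ)⟫ dφ ) = 1; equivalently, the Berry phase θ = −i ∫_{−π}^{π} ⟪ψ(φ), ψ′(φ)⟫ dφ is real and quantized to 0 or π modulo 2π. -/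

import Mathlib

/-!
Differentiating `‖ψ‖² = 1` shows that `A = ⟪ψ, ψ'⟫` is purely imaginary. The two conditions on `τ`
say that `τ†` is both a left inverse of `τ` and equal to `conj τ`, so `τ` is symmetric, and then
`ρ = ⟪ψ, τ conj ψ⟫` is a symmetric form evaluated on the diagonal. Hence
`ρ' = 2 ⟪ψ', τ conj ψ⟫ = 2 ρ conj A = -2 A ρ`, so `ρ(π) = ρ(-π) · exp (-2 ∫ A)`. Since `ρ` is
periodic together with `ψ` and never vanishes (`τ` is injective), `exp (2 ∫ A) = 1`.
-/

open Matrix Real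

/-- The standard Hermitian inner product `⟪x, y⟫ = Σᵢ conj (x i) * y i` on `ℂⁿ`,
conjugate-linear in the first argument. -/
noncomputable def herm {n : ℕ} (x y : Fin n → ℂ) : ℂ :=
  ∑ i, starRingEnd ℂ (x i) * y i

theorem herm_eq_star_dotProduct {n : ℕ} (x y : Fin n → ℂ) : herm x y = star x ⬝ᵥ y := rfl

theorem star_herm {n : ℕ} (x y : Fin n → ℂ) : star (herm x y) = herm y x :=
  (star_dotProduct y x).symm

theorem herm_smul_right {n : ℕ} (x y : Fin n → ℂ) (c : ℂ) : herm x (c • y) = c * herm x y :=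
  dotProduct_smul c (star x) y

theorem herm_mulVec_star_comm {n : ℕ} {τ : Matrix (Fin n) (Fin n) ℂ} (hτ : τ.IsSymm)
    (x y : Fin n → ℂ) : herm x (τ *ᵥ star y) = herm y (τ *ᵥ star x) := by
  rw [herm_eq_star_dotProduct, herm_eq_star_dotProduct, dotProduct_mulVec, dotProduct_comm,
    ← mulVec_transpose, hτ.eq]

theorem Continuous.herm {n : ℕ} {f g : ℝ → Fin n → ℂ} (hf : Continuous f) (hg : Continuous g) :
    Continuous fun t => _root_.herm (f t) (g t) :=
  hf.star.dotProduct hg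

theorem hasDerivAt_herm {n : ℕ} {f g : ℝ → Fin n → ℂ} {f' g' : Fin n → ℂ} {t : ℝ}
    (hf : HasDerivAt f f' t) (hg : HasDerivAt g g' t) :
    HasDerivAt (fun s => herm (f s) (g s)) (herm f' (g t) + herm (f t) g') t := by
  unfold herm
  rw [← Finset.sum_add_distrib]
  exact HasDerivAt.fun_sum fun i _ =>
    ((hasDerivAt_pi.1 hf i).star.mul (hasDerivAt_pi.1 hg i))

theorem HasDerivAt.matrix_mulVec {ι : Type*} [Fintype ι] (A : Matrix ι ι ℂ) {f : ℝ → ι → ℂ}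
    {f' : ι → ℂ} {t : ℝ} (hf : HasDerivAt f f' t) :
    HasDerivAt (fun s => A *ᵥ f s) (A *ᵥ f') t :=
  ((A.mulVecLin.restrictScalars ℝ).toContinuousLinearMap).hasFDerivAt.comp_hasDerivAt t hf

theorem Matrix.isSymm_of_conjTranspose_mul_self_eq_one_of_mul_map_star_eq_one {R ι : Type*}
    [Semiring R] [StarRing R] [Fintype ι] [DecidableEq ι] {τ : Matrix ι ι R}
    (h₁ : τᴴ * τ = 1) (h₂ : τ * τ.map star = 1) : τ.IsSymm := by
  have h : τᴴ = τ.map star := left_inv_eq_right_inv h₁ h₂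
  exact IsSymm.ext_iff.2 fun i j => star_injective (congr_fun₂ h i j)

theorem Matrix.ne_zero_of_mulVec_star_eq_smul {R ι : Type*} [Semiring R] [StarRing R]
    [Fintype ι] [DecidableEq ι] {τ : Matrix ι ι R} (hτ : τᴴ * τ = 1) {x : ι → R} (hx : x ≠ 0)
    {c : R} (h : τ *ᵥ star x = c • x) : c ≠ 0 := by
  rintro rfl
  have : star x = 0 := by simpa [mulVec_mulVec, hτ] using congrArg (τᴴ *ᵥ ·) h
  exact hx (star_eq_zero.1 this)

theorem star_herm_deriv_eq_neg {n : ℕ} {ψ ψ' : ℝ → Fin n → ℂ} {c : ℂ}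
    (hψ : ∀ t, HasDerivAt ψ (ψ' t) t) (hnorm : ∀ t, herm (ψ t) (ψ t) = c) (t : ℝ) :
    star (herm (ψ t) (ψ' t)) = -herm (ψ t) (ψ' t) := by
  have hconst : HasDerivAt (fun s => herm (ψ s) (ψ s)) 0 t := by
    simpa only [hnorm] using hasDerivAt_const t c
  have h := (hasDerivAt_herm (hψ t) (hψ t)).unique hconst
  rw [← star_herm] at h
  exact eq_neg_of_add_eq_zero_left h

theorem eq_mul_cexp_integral_of_hasDerivAt {ρ A : ℝ → ℂ} (hA : Continuous A)
    (hρ : ∀ t, HasDerivAt ρ (A t * ρ t) t) (a b : ℝ) :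
    ρ b = ρ a * Complex.exp (∫ t in a..b, A t) := by
  set L : ℝ → ℂ := fun t => ∫ s in a..t, A s
  have hL : ∀ t, HasDerivAt L (A t) t := fun t =>
    (hA.integral_hasStrictDerivAt a t).hasDerivAt
  have hF : ∀ t, HasDerivAt (fun s => ρ s * Complex.exp (-L s)) 0 t := fun t =>
    ((hρ t).mul (hL t).neg.cexp).congr_deriv (by ring)
  have hconst := is_const_of_deriv_eq_zero (fun t => (hF t).differentiableAt)
    (fun t => (hF t).deriv) b a
  have hLa : L a = 0 := intervalIntegral.integral_same
  rw [hLa, neg_zero, Complex.exp_zero, mul_one] at hconst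
  rw [← hconst, mul_assoc, ← Complex.exp_add, neg_add_cancel, Complex.exp_zero, mul_one]

theorem eq_herm_of_mulVec_star_eq_smul {n : ℕ} {τ : Matrix (Fin n) (Fin n) ℂ} {x : Fin n → ℂ}
    (hx : herm x x = 1) {c : ℂ} (h : τ *ᵥ star x = c • x) : c = herm x (τ *ᵥ star x) := by
  rw [h, herm_smul_right, hx, mul_one]

theorem hasDerivAt_of_mulVec_star_eq_smul {n : ℕ} {τ : Matrix (Fin n) (Fin n) ℂ}
    (hτ : τ.IsSymm) {ψ ψ' : ℝ → Fin n → ℂ} (hψ : ∀ t, HasDerivAt ψ (ψ' t) t)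
    (hnorm : ∀ t, herm (ψ t) (ψ t) = 1) {ρ : ℝ → ℂ} (hGT : ∀ t, τ *ᵥ star (ψ t) = ρ t • ψ t)
    (t : ℝ) : HasDerivAt ρ (-2 * herm (ψ t) (ψ' t) * ρ t) t := by
  have hρ : ρ = fun s => herm (ψ s) (τ *ᵥ star (ψ s)) :=
    funext fun s => eq_herm_of_mulVec_star_eq_smul (hnorm s) (hGT s)
  have h := hasDerivAt_herm (hψ t) ((hψ t).star.matrix_mulVec τ)
  rw [herm_mulVec_star_comm hτ (ψ t), ← two_mul, ← hρ, hGT, herm_smul_right, ← star_herm,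
    star_herm_deriv_eq_neg hψ hnorm] at h
  exact h.congr_deriv (by ring)

theorem GT_protected_quantized_berry_phase_general (n : ℕ)
    (ψ ψ' : ℝ → Fin n → ℂ)
    (hd : ∀ i t, HasDerivAt (fun s => ψ s i) (ψ' t i) t)
    (hc : ∀ i, Continuous fun t => ψ' t i)
    (hper : ∀ φ, ψ (φ + 2 * π) = ψ φ)
    (hnorm : ∀ φ, herm (ψ φ) (ψ φ) = 1)
    (τ : Matrix (Fin n) (Fin n) ℂ)
    (hτ1 : τᴴ * τ = 1) (hτ2 : τ * τ.map (starRingEnd ℂ) = 1)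
    (ρ : ℝ → ℂ)
    (hGT : ∀ φ, τ.mulVec (fun i => starRingEnd ℂ (ψ φ i)) = ρ φ • ψ φ) :
    Complex.exp (2 * ∫ φ in (-π)..π, herm (ψ φ) (ψ' φ)) = 1 := by
  have hψ : ∀ t, HasDerivAt ψ (ψ' t) t := fun t => hasDerivAt_pi.2 fun i => hd i t
  have hA : Continuous fun t => -2 * herm (ψ t) (ψ' t) :=
    continuous_const.mul <| (continuous_iff_continuousAt.2 fun t => (hψ t).continuousAt).herm
      (continuous_pi hc)
  have hρ := hasDerivAt_of_mulVec_star_eq_smul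
    (isSymm_of_conjTranspose_mul_self_eq_one_of_mul_map_star_eq_one hτ1 hτ2) hψ hnorm hGT
  have hρπ : ρ π = ρ (-π) := by
    have hψπ : ψ π = ψ (-π) := by simpa [show -π + 2 * π = π by ring] using hper (-π)
    rw [eq_herm_of_mulVec_star_eq_smul (hnorm _) (hGT π), hψπ,
      ← eq_herm_of_mulVec_star_eq_smul (hnorm _) (hGT (-π))]
  have hρ0 : ρ (-π) ≠ 0 :=
    ne_zero_of_mulVec_star_eq_smul hτ1 (fun h => by simpa [h, herm] using hnorm (-π)) (hGT (-π))
  have h := eq_mul_cexp_integral_of_hasDerivAt hA hρ (-π) π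
  rwa [hρπ, eq_comm, mul_eq_left₀ hρ0, intervalIntegral.integral_const_mul, neg_mul,
    Complex.exp_neg, inv_eq_one] at h

/-- **GT-symmetry–protected quantized Berry phase.**
For a self-closed (2π-periodic, continuously differentiable) normalized eigenvector
family `ψ` along a loop in the `GT`-invariant subspace, with a symmetric unitary `τ`
(`τ† τ = 1`, `τ conj(τ) = 1`, so the antiunitary operation squares to the identity)
mapping the state to itself, `τ conj(ψ(φ)) = ρ(φ) ψ(φ)`, one has
`exp (2 ∫_{-π}^{π} ⟪ψ, ψ'⟫ dφ) = 1`: the Berry phase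
`θ = -i ∫_{-π}^{π} ⟪ψ, ψ'⟫ dφ` is real and quantized to `0` or `π` modulo `2π`. -/
theorem GT_protected_quantized_berry_phase (n : ℕ) (hn : 1 ≤ n)
    (ψ ψ' : ℝ → Fin n → ℂ)
    (hd : ∀ i t, HasDerivAt (fun s => ψ s i) (ψ' t i) t)
    (hc : ∀ i, Continuous fun t => ψ' t i)
    (hper : ∀ φ, ψ (φ + 2 * π) = ψ φ)
    (hnorm : ∀ φ, herm (ψ φ) (ψ φ) = 1)
    (τ : Matrix (Fin n) (Fin n) ℂ)
    (hτ1 : τᴴ * τ = 1) (hτ2 : τ * τ.map (starRingEnd ℂ) = 1)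
    (ρ : ℝ → ℂ) (hρ : Differentiable ℝ ρ)
    (hGT : ∀ φ, τ.mulVec (fun i => starRingEnd ℂ (ψ φ i)) = ρ φ • ψ φ) :
    Complex.exp (2 * ∫ φ in (-π)..π, herm (ψ φ) (ψ' φ)) = 1 :=
  GT_protected_quantized_berry_phase_general n ψ ψ' hd hc hper hnorm τ hτ1 hτ2 ρ hGT
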